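/- arXiv:2212.00211 — 2 statements merged into one kernel-verified Lean document; each statement's English description precedes it below -/
import Mathlib

section
/- The DPP probability measure is well defined: for a symmetric positive semidefinite N×N matrix L, the function W ↦ det(L_W)/det(L+I) on subsets of {1,...,N} is nonnegative and sums to 1 over all subsets. -/
/-- Principal submatrix of `L` indexed by the subset `W`. -/
def principalSub {N : ℕ} (L : Matrix (Fin N) (Fin N) ℝ) (W : Finset (Fin N)) :
    Matrix W W ℝ :=
  L.submatrix Subtype.val Subtype.val

open Matrix

lemma psd_det_nonneg {n : Type*} [Fintype n] [DecidableEq n]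
    {M : Matrix n n ℝ} (hM : M.PosSemidef) : 0 ≤ M.det := by
  exact hM.det_nonneg

lemma piecewise_det {N : ℕ} (L : Matrix (Fin N) (Fin N) ℝ) (s : Finset (Fin N)) :
    (Matrix.of (s.piecewise (fun i => L i) (fun i => (1 : Matrix (Fin N) (Fin N) ℝ) i))).det
      = (principalSub L s).det := by
  classical
  let e : {i // i ∈ s} ⊕ {i // i ∉ s} ≃ Fin N := Equiv.sumCompl (· ∈ s)
  rw [← Matrix.det_submatrix_equiv_self e]
  have : (Matrix.of (s.piecewise (fun i => L i)
      (fun i => (1 : Matrix (Fin N) (Fin N) ℝ) i))).submatrix e e =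
      Matrix.fromBlocks (principalSub L s)
        (Matrix.of fun (i : {i // i ∈ s}) (j : {i // i ∉ s}) => L i j) 0 1 := by
    ext i j
    cases i with
    | inl i =>
      cases j with
      | inl j =>
        simp [e, Matrix.submatrix_apply, Finset.piecewise_eq_of_mem _ _ _ i.2,
          principalSub]
      | inr j =>
        simp [e, Matrix.submatrix_apply, Finset.piecewise_eq_of_mem _ _ _ i.2]
    | inr i =>
      cases j with
      | inl j =>
        have hij : (i : Fin N) ≠ (j : Fin N) := fun h => i.2 (h ▸ j.2)
        simp [e, Matrix.submatrix_apply, Finset.piecewise_eq_of_notMem _ _ _ i.2,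
          Matrix.one_apply_ne hij]
      | inr j =>
        have : ((i : Fin N) = (j : Fin N)) ↔ i = j := Subtype.val_inj
        simp [e, Matrix.submatrix_apply, Finset.piecewise_eq_of_notMem _ _ _ i.2,
          Matrix.one_apply, this]
  rw [this, Matrix.det_fromBlocks_zero₂₁, Matrix.det_one, mul_one]

lemma det_add_one_eq_sum {N : ℕ} (L : Matrix (Fin N) (Fin N) ℝ) :
    (L + 1).det = ∑ W : Finset (Fin N), (principalSub L W).det := by
  classical
  calc (L + 1).det
      = (Matrix.detRowAlternating (R := ℝ) (n := Fin N)).toMultilinearMap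
          (fun i => (fun i => L i) i + (fun i => (1 : Matrix (Fin N) (Fin N) ℝ) i) i) := rfl
    _ = ∑ s : Finset (Fin N),
          (Matrix.detRowAlternating (R := ℝ) (n := Fin N)).toMultilinearMap
            (s.piecewise (fun i => L i) (fun i => (1 : Matrix (Fin N) (Fin N) ℝ) i)) :=
        MultilinearMap.map_add_univ _ _ _
    _ = ∑ W : Finset (Fin N), (principalSub L W).det :=
        Finset.sum_congr rfl fun s _ => piecewise_det L s

/-- The DPP measure `W ↦ det(L_W)/det(L+I)` is a probability distribution on
subsets of `{1,...,N}`: nonnegative and summing to one. -/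
theorem dpp_is_probability_measure {N : ℕ}
    (L : Matrix (Fin N) (Fin N) ℝ) (hL : L.PosSemidef) :
    (∀ W : Finset (Fin N), 0 ≤ (principalSub L W).det / (L + 1).det) ∧
      ∑ W : Finset (Fin N), (principalSub L W).det / (L + 1).det = 1 := by
  have hpos : 0 < (L + 1).det := by
    have : (L + 1).PosDef := Matrix.PosDef.posSemidef_add hL Matrix.PosDef.one
    exact this.det_pos
  constructor
  · intro W
    have hW : (principalSub L W).PosSemidef := hL.submatrix _
    exact div_nonneg (psd_det_nonneg hW) hpos.le
  · rw [← Finset.sum_div, ← det_add_one_eq_sum, div_self hpos.ne']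
end

section
/- The log-determinant set function is submodular: if L is a symmetric positive definite N×N matrix and l(W) = log det(L_W) for W ⊆ {1,...,N} (with l(∅)=0), then for all i ∉ W₂ and W₁ ⊆ W₂ ⊆ {1,...,N}\{i}, we have l(W₁ ∪ {i}) − l(W₁) ≥ l(W₂ ∪ {i}) − l(W₂). -/
open Matrix BigOperators

namespace LogdetAux

variable {N : ℕ}

/-- Extension by zero of a vector on `W` to a vector on `Fin N`. -/
def ext0 {W : Finset (Fin N)} (x : W → ℝ) : Fin N → ℝ :=
  fun j => if h : j ∈ W then x ⟨j, h⟩ else 0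

lemma sum_ext0_mul {W : Finset (Fin N)} (x : W → ℝ) (g : Fin N → ℝ) :
    ∑ j, ext0 x j * g j = ∑ w : W, x w * g w := by
  classical
  rw [← Finset.sum_subset (Finset.subset_univ W)
    (fun j _ hj => by simp [ext0, hj])]
  rw [Finset.univ_eq_attach, ← Finset.sum_attach W (fun j => ext0 x j * g j)]
  refine Finset.sum_congr rfl fun w _ => ?_
  simp [ext0, w.2]

lemma dotProduct_ext0 {W : Finset (Fin N)} (L : Matrix (Fin N) (Fin N) ℝ)
    (x y : W → ℝ) :
    ext0 x ⬝ᵥ (L *ᵥ ext0 y) = x ⬝ᵥ ((principalSub L W) *ᵥ y) := by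
  classical
  rw [dotProduct, sum_ext0_mul x (fun j => (L *ᵥ ext0 y) j)]
  refine Finset.sum_congr rfl fun w _ => ?_
  congr 1
  show (L *ᵥ ext0 y) (w : Fin N) = _
  rw [mulVec, dotProduct]
  rw [show ∑ j, L (w : Fin N) j * ext0 y j
      = ∑ j, ext0 y j * L (w : Fin N) j by
    exact Finset.sum_congr rfl fun j _ => mul_comm _ _]
  rw [sum_ext0_mul y (fun j => L (w : Fin N) j)]
  rw [mulVec, dotProduct]
  exact Finset.sum_congr rfl fun v _ => by
    rw [mul_comm]; rfl

lemma dotProduct_ext0_vec {W : Finset (Fin N)} (y : W → ℝ) (g : Fin N → ℝ) :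
    y ⬝ᵥ (fun w : W => g w) = ∑ j, ext0 y j * g j := by
  rw [sum_ext0_mul y g, dotProduct]

lemma posDef_principalSub (L : Matrix (Fin N) (Fin N) ℝ) (hL : L.PosDef)
    (W : Finset (Fin N)) : (principalSub L W).PosDef := by
  classical
  refine Matrix.PosDef.of_dotProduct_mulVec_pos (hL.1.submatrix _) fun x hx => ?_
  have hne : ext0 x ≠ 0 := by
    obtain ⟨w, hw⟩ := Function.ne_iff.mp hx
    intro h
    apply hw
    have := congrFun h w
    simpa [ext0, w.2] using this
  have := hL.dotProduct_mulVec_pos hne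
  simpa [star_trivial, dotProduct_ext0 L x x] using this

/-- The Schur-complement scalar. -/
noncomputable def schur (L : Matrix (Fin N) (Fin N) ℝ) (i : Fin N)
    (W : Finset (Fin N)) : ℝ :=
  L i i - (fun w : W => L w i) ⬝ᵥ ((principalSub L W)⁻¹ *ᵥ (fun w : W => L w i))

/-- Equivalence between `W ⊕ Unit` and `insert i W`. -/
def insEquiv (i : Fin N) (W : Finset (Fin N)) (hi : i ∉ W) :
    (W ⊕ Unit) ≃ {a // a ∈ insert i W} where
  toFun := Sum.elim (fun w => ⟨w, Finset.mem_insert_of_mem w.2⟩)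
    (fun _ => ⟨i, Finset.mem_insert_self i W⟩)
  invFun := fun j => if h : (j : Fin N) ∈ W then Sum.inl ⟨j, h⟩ else Sum.inr ()
  left_inv := by
    rintro (w | u)
    · simp
    · simp [hi]
  right_inv := by
    rintro ⟨j, hj⟩
    rcases Finset.mem_insert.mp hj with h | h
    · subst h; simp [hi]
    · simp [h]

lemma det_insert (L : Matrix (Fin N) (Fin N) ℝ) (hL : L.PosDef)
    (i : Fin N) (W : Finset (Fin N)) (hi : i ∉ W) :
    (principalSub L (insert i W)).det
      = (principalSub L W).det * schur L i W := by
  classical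
  have hPD := posDef_principalSub L hL W
  haveI : Invertible (principalSub L W) :=
    Matrix.invertibleOfIsUnitDet _ (isUnit_iff_ne_zero.mpr hPD.det_pos.ne')
  let A := principalSub L W
  let B : Matrix W Unit ℝ := fun w _ => L w i
  let C : Matrix Unit W ℝ := fun _ w => L i w
  let D : Matrix Unit Unit ℝ := fun _ _ => L i i
  have hsub : (principalSub L (insert i W)).submatrix (insEquiv i W hi)
      (insEquiv i W hi) = Matrix.fromBlocks A B C D := by
    ext (j | j) (k | k) <;> rfl
  have hdet : (principalSub L (insert i W)).det
      = (Matrix.fromBlocks A B C D).det := by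
    rw [← hsub, Matrix.det_submatrix_equiv_self]
  rw [hdet, Matrix.det_fromBlocks₁₁, Matrix.invOf_eq_nonsing_inv]
  congr 1
  rw [Matrix.det_unique]
  show D () () - (C * A⁻¹ * B) () () = schur L i W
  have hsym : ∀ w : W, L i w = L w i := fun w => by
    have := congrFun (congrFun hL.1 i) w
    simpa [Matrix.conjTranspose_apply] using this.symm
  simp only [schur, Matrix.mul_apply, D, C, B, dotProduct, mulVec,
    Finset.sum_mul, Finset.mul_sum]
  congr 1
  rw [Finset.sum_comm]
  refine Finset.sum_congr rfl fun w _ => ?_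
  show (∑ v : W, L i v * (principalSub L W)⁻¹ v w) * L w i = _
  rw [Finset.sum_mul]
  refine Finset.sum_congr rfl fun v _ => ?_
  rw [hsym v]
  ring

lemma key_ineq {n : Type*} [Fintype n] [DecidableEq n]
    (M : Matrix n n ℝ) (hM : M.PosDef) (x y : n → ℝ) :
    2 * (y ⬝ᵥ x) - y ⬝ᵥ (M *ᵥ y) ≤ x ⬝ᵥ (M⁻¹ *ᵥ x) := by
  classical
  have hMinv : M * M⁻¹ = 1 := Matrix.mul_nonsing_inv _ (isUnit_iff_ne_zero.mpr hM.det_pos.ne')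
  have hMinvM : M⁻¹ * M = 1 := Matrix.nonsing_inv_mul _ (isUnit_iff_ne_zero.mpr hM.det_pos.ne')
  set z : n → ℝ := y - M⁻¹ *ᵥ x with hz
  have h0 : 0 ≤ z ⬝ᵥ (M *ᵥ z) := by
    rcases eq_or_ne z 0 with h | h
    · simp [h]
    · exact le_of_lt (by simpa [star_trivial] using hM.dotProduct_mulVec_pos h)
  have hsymM : Mᵀ = M := hM.1
  have hMx : M *ᵥ (M⁻¹ *ᵥ x) = x := by
    rw [Matrix.mulVec_mulVec, hMinv, Matrix.one_mulVec]
  have e1 : (M⁻¹ *ᵥ x) ⬝ᵥ (M *ᵥ y) = x ⬝ᵥ y := by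
    rw [Matrix.dotProduct_mulVec, ← Matrix.mulVec_transpose, hsymM, hMx]
  have e2 : y ⬝ᵥ (M *ᵥ (M⁻¹ *ᵥ x)) = y ⬝ᵥ x := by rw [hMx]
  have e3 : (M⁻¹ *ᵥ x) ⬝ᵥ (M *ᵥ (M⁻¹ *ᵥ x)) = x ⬝ᵥ (M⁻¹ *ᵥ x) := by
    rw [hMx, dotProduct_comm]
  have expand : z ⬝ᵥ (M *ᵥ z)
      = y ⬝ᵥ (M *ᵥ y) - y ⬝ᵥ x - x ⬝ᵥ y + x ⬝ᵥ (M⁻¹ *ᵥ x) := by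
    rw [hz, Matrix.mulVec_sub, sub_dotProduct, dotProduct_sub,
      dotProduct_sub, e1, e2, e3]
    ring
  have hcomm : x ⬝ᵥ y = y ⬝ᵥ x := dotProduct_comm _ _
  nlinarith [h0, expand]

lemma self_val {n : Type*} [Fintype n] [DecidableEq n]
    (M : Matrix n n ℝ) (hM : M.PosDef) (x : n → ℝ) :
    x ⬝ᵥ (M⁻¹ *ᵥ x)
      = 2 * ((M⁻¹ *ᵥ x) ⬝ᵥ x) - (M⁻¹ *ᵥ x) ⬝ᵥ (M *ᵥ (M⁻¹ *ᵥ x)) := by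
  have hMinv : M * M⁻¹ = 1 := Matrix.mul_nonsing_inv _ (isUnit_iff_ne_zero.mpr hM.det_pos.ne')
  have hMx : M *ᵥ (M⁻¹ *ᵥ x) = x := by
    rw [Matrix.mulVec_mulVec, hMinv, Matrix.one_mulVec]
  rw [hMx, dotProduct_comm x]
  ring

lemma ext0_restrict {W₁ W₂ : Finset (Fin N)} (h12 : W₁ ⊆ W₂) (y : W₁ → ℝ) :
    ext0 (fun w : W₂ => if h : (w : Fin N) ∈ W₁ then y ⟨w, h⟩ else 0)
      = ext0 y := by
  classical
  funext j
  by_cases h1 : j ∈ W₁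
  · have h2 : j ∈ W₂ := h12 h1
    simp [ext0, h1, h2]
  · by_cases h2 : j ∈ W₂ <;> simp [ext0, h1, h2]

lemma schur_mono (L : Matrix (Fin N) (Fin N) ℝ) (hL : L.PosDef)
    (i : Fin N) (W₁ W₂ : Finset (Fin N)) (h12 : W₁ ⊆ W₂) :
    schur L i W₂ ≤ schur L i W₁ := by
  classical
  have hPD₁ := posDef_principalSub L hL W₁
  have hPD₂ := posDef_principalSub L hL W₂
  set x₁ : W₁ → ℝ := fun w => L w i
  set x₂ : W₂ → ℝ := fun w => L w i
  set y₁ : W₁ → ℝ := (principalSub L W₁)⁻¹ *ᵥ x₁ with hy₁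
  set y₂ : W₂ → ℝ := fun w => if h : (w : Fin N) ∈ W₁ then y₁ ⟨w, h⟩ else 0
    with hy₂
  have hext : ext0 y₂ = ext0 y₁ := ext0_restrict h12 y₁
  have hquad : y₂ ⬝ᵥ ((principalSub L W₂) *ᵥ y₂)
      = y₁ ⬝ᵥ ((principalSub L W₁) *ᵥ y₁) := by
    rw [← dotProduct_ext0 L y₂ y₂, ← dotProduct_ext0 L y₁ y₁, hext]
  have hlin : y₂ ⬝ᵥ x₂ = y₁ ⬝ᵥ x₁ := by
    have h2 : y₂ ⬝ᵥ x₂ = ∑ j, ext0 y₂ j * L j i :=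
      dotProduct_ext0_vec y₂ (fun j => L j i)
    have h1 : y₁ ⬝ᵥ x₁ = ∑ j, ext0 y₁ j * L j i :=
      dotProduct_ext0_vec y₁ (fun j => L j i)
    rw [h1, h2, hext]
  have key : x₁ ⬝ᵥ ((principalSub L W₁)⁻¹ *ᵥ x₁)
      ≤ x₂ ⬝ᵥ ((principalSub L W₂)⁻¹ *ᵥ x₂) := by
    calc x₁ ⬝ᵥ ((principalSub L W₁)⁻¹ *ᵥ x₁)
        = 2 * (y₁ ⬝ᵥ x₁) - y₁ ⬝ᵥ ((principalSub L W₁) *ᵥ y₁) :=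
          self_val _ hPD₁ x₁
      _ = 2 * (y₂ ⬝ᵥ x₂) - y₂ ⬝ᵥ ((principalSub L W₂) *ᵥ y₂) := by
          rw [hquad, hlin]
      _ ≤ x₂ ⬝ᵥ ((principalSub L W₂)⁻¹ *ᵥ x₂) := key_ineq _ hPD₂ x₂ y₂
  simpa [schur] using sub_le_sub_left key (L i i)

lemma schur_pos (L : Matrix (Fin N) (Fin N) ℝ) (hL : L.PosDef)
    (i : Fin N) (W : Finset (Fin N)) (hi : i ∉ W) :
    0 < schur L i W := by
  have hdet := det_insert L hL i W hi
  have h1 : 0 < (principalSub L (insert i W)).det :=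
    (posDef_principalSub L hL (insert i W)).det_pos
  have h2 : 0 < (principalSub L W).det := (posDef_principalSub L hL W).det_pos
  rw [hdet] at h1
  by_contra h
  push_neg at h
  nlinarith

end LogdetAux

/-- Submodularity of the log-determinant set function `l(W) = log det(L_W)` for
a symmetric positive definite matrix `L`. -/
theorem logdet_submodular {N : ℕ}
    (L : Matrix (Fin N) (Fin N) ℝ) (hL : L.PosDef)
    (i : Fin N) (W₁ W₂ : Finset (Fin N)) (hi : i ∉ W₂) (h12 : W₁ ⊆ W₂) :
    Real.log (principalSub L (insert i W₂)).det -
        Real.log (principalSub L W₂).det ≤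
      Real.log (principalSub L (insert i W₁)).det -
        Real.log (principalSub L W₁).det := by
  classical
  have hi₁ : i ∉ W₁ := fun h => hi (h12 h)
  have hd1 := LogdetAux.det_insert L hL i W₁ hi₁
  have hd2 := LogdetAux.det_insert L hL i W₂ hi
  have hp1 : (0:ℝ) < (principalSub L W₁).det :=
    (LogdetAux.posDef_principalSub L hL W₁).det_pos
  have hp2 : (0:ℝ) < (principalSub L W₂).det :=
    (LogdetAux.posDef_principalSub L hL W₂).det_pos
  have hs1 : 0 < LogdetAux.schur L i W₁ := LogdetAux.schur_pos L hL i W₁ hi₁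
  have hs2 : 0 < LogdetAux.schur L i W₂ := LogdetAux.schur_pos L hL i W₂ hi
  rw [hd1, hd2, Real.log_mul hp1.ne' hs1.ne', Real.log_mul hp2.ne' hs2.ne']
  have hmono := LogdetAux.schur_mono L hL i W₁ W₂ h12
  have := Real.log_le_log hs2 hmono
  linarith
end
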